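/- arXiv:2408.13115 — 5 statements merged into one kernel-verified Lean document; each statement's English description precedes it below -/
import Mathlib

section
/- Let Σ be a symmetric positive-definite d×d real matrix, m ∈ ℝ^d, and let V(x) = (1/2)(x−m)ᵀΣ^{-1}(x−m). Fix h > 0. If ρ is the Gaussian measure on ℝ^d with mean m_k and positive-semidefinite covariance Σ_k, then the unadjusted Langevin kernel T_h with potential V maps ρ to the Gaussian measure with mean m_{k+1} and covariance Σ_{k+1}, where m_{k+1} − m = (I − hΣ^{-1})(m_k − m) and Σ_{k+1} = (I − hΣ^{-1})·Σ_k·(I − hΣ^{-1}) + 2h·I. -/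
open MeasureTheory

/-- The standard Gaussian measure `N(0, I_d)` on `ℝ^d`. -/
noncomputable def stdGaussian (d : ℕ) : Measure (Fin d → ℝ) :=
  Measure.pi fun _ => ProbabilityTheory.gaussianReal 0 1

/-- The unadjusted Langevin kernel with step size `h` and gradient field `gradV`:
the law of `X - h ∇V(X) + √(2h) ξ` where `X ∼ ρ` and `ξ ∼ N(0, I_d)` independent. -/
noncomputable def langevinKernel {d : ℕ} (h : ℝ) (gradV : (Fin d → ℝ) → (Fin d → ℝ))
    (ρ : Measure (Fin d → ℝ)) : Measure (Fin d → ℝ) :=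
  (ρ.prod (stdGaussian d)).map fun p => p.1 - h • gradV p.1 + Real.sqrt (2 * h) • p.2

open scoped ComplexOrder in
/-- The square root of a positive-semidefinite matrix, as `Matrix.PosSemidef.sqrt` was
defined in Mathlib (Dec 2024); that definition has since been removed. -/
noncomputable def Matrix.PosSemidef.sqrt {n 𝕜 : Type*} [Fintype n] [DecidableEq n] [RCLike 𝕜]
    {A : Matrix n n 𝕜} (hA : A.PosSemidef) : Matrix n n 𝕜 :=
  hA.1.eigenvectorUnitary.1 * Matrix.diagonal ((↑) ∘ (√·) ∘ hA.1.eigenvalues) *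
  (star hA.1.eigenvectorUnitary : Matrix n n 𝕜)

/-- The Gaussian measure on `ℝ^d` with mean `m` and positive-semidefinite covariance `C`:
the law of `m + C^{1/2} Z` for `Z ∼ N(0, I_d)`. -/
noncomputable def gaussianPi {d : ℕ} (m : Fin d → ℝ) {C : Matrix (Fin d) (Fin d) ℝ}
    (hC : C.PosSemidef) : Measure (Fin d → ℝ) :=
  (stdGaussian d).map fun z => m + hC.sqrt.mulVec z

/-! ### Auxiliary lemmas -/

open ProbabilityTheory Matrix
open scoped ENNReal NNReal

section Aux

open scoped ComplexOrder in
lemma Matrix.PosSemidef.isHermitian_sqrt' {n 𝕜 : Type*} [Fintype n] [DecidableEq n] [RCLike 𝕜]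
    {A : Matrix n n 𝕜} (hA : A.PosSemidef) : (hA.sqrt).conjTranspose = hA.sqrt := by
  unfold Matrix.PosSemidef.sqrt
  have hD : (Matrix.diagonal ((↑) ∘ (√·) ∘ hA.1.eigenvalues : n → 𝕜)).conjTranspose =
      Matrix.diagonal ((↑) ∘ (√·) ∘ hA.1.eigenvalues) := by
    rw [Matrix.diagonal_conjTranspose]
    congr 1
    funext i
    simp [Function.comp_apply]
  rw [Matrix.conjTranspose_mul, Matrix.conjTranspose_mul, hD,
    ← Matrix.star_eq_conjTranspose, ← Matrix.star_eq_conjTranspose, star_star]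
  simp only [mul_assoc]

open scoped ComplexOrder in
lemma Matrix.PosSemidef.sqrt_mul_self' {n 𝕜 : Type*} [Fintype n] [DecidableEq n] [RCLike 𝕜]
    {A : Matrix n n 𝕜} (hA : A.PosSemidef) : hA.sqrt * hA.sqrt = A := by
  unfold Matrix.PosSemidef.sqrt
  set U : Matrix n n 𝕜 := hA.1.eigenvectorUnitary.1
  have hU : (star hA.1.eigenvectorUnitary : Matrix n n 𝕜) * U = 1 :=
    Unitary.coe_star_mul_self _
  have hD : Matrix.diagonal ((↑) ∘ (√·) ∘ hA.1.eigenvalues) *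
      Matrix.diagonal ((↑) ∘ (√·) ∘ hA.1.eigenvalues) =
      Matrix.diagonal (RCLike.ofReal ∘ hA.1.eigenvalues : n → 𝕜) := by
    rw [Matrix.diagonal_mul_diagonal]
    congr 1
    funext i
    simp only [Function.comp_apply]
    rw [← RCLike.ofReal_mul, Real.mul_self_sqrt (hA.eigenvalues_nonneg i)]
  conv_rhs => rw [hA.1.spectral_theorem, Unitary.conjStarAlgAut_apply]
  calc U * Matrix.diagonal ((↑) ∘ (√·) ∘ hA.1.eigenvalues) *
        (star hA.1.eigenvectorUnitary : Matrix n n 𝕜) *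
      (U * Matrix.diagonal ((↑) ∘ (√·) ∘ hA.1.eigenvalues) *
        (star hA.1.eigenvectorUnitary : Matrix n n 𝕜))
      = U * Matrix.diagonal ((↑) ∘ (√·) ∘ hA.1.eigenvalues) *
        ((star hA.1.eigenvectorUnitary : Matrix n n 𝕜) * U) *
        Matrix.diagonal ((↑) ∘ (√·) ∘ hA.1.eigenvalues) *
        (star hA.1.eigenvectorUnitary : Matrix n n 𝕜) := by simp only [mul_assoc]
    _ = _ := by rw [hU, mul_one, mul_assoc U, hD]


lemma measurable_mulVec' {k l : Type*} [Fintype l] (M : Matrix k l ℝ) :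
    Measurable M.mulVec := by
  apply measurable_pi_lambda
  intro i
  simp only [Matrix.mulVec, dotProduct]
  exact Finset.measurable_sum _ fun j _ => (measurable_pi_apply j).const_mul _

lemma map_withDensity_comp {α β : Type*} [MeasurableSpace α] [MeasurableSpace β]
    (μ : Measure α) {φ : α → β} (hφ : Measurable φ) {f : β → ℝ≥0∞} (hf : Measurable f) :
    (μ.withDensity (fun x => f (φ x))).map φ = (μ.map φ).withDensity f := by
  ext s hs
  rw [Measure.map_apply hφ hs, withDensity_apply _ (hφ hs), withDensity_apply _ hs,
    setLIntegral_map hs hf hφ]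

lemma lintegral_pi_fin : ∀ {n : ℕ} (μ : Fin n → Measure ℝ), (∀ i, SigmaFinite (μ i)) →
    ∀ f : Fin n → ℝ → ℝ≥0∞, (∀ i, Measurable (f i)) →
    ∫⁻ x, ∏ i, f i (x i) ∂Measure.pi μ = ∏ i, ∫⁻ t, f i t ∂μ i
  | 0, μ, hσ, f, hf => by
    haveI := hσ
    simp [lintegral_one, Measure.pi_univ]
  | (n+1), μ, hσ, f, hf => by
    haveI := hσ
    have e := measurePreserving_piFinSuccAbove μ 0
    have hmeas : Measurable fun p : ℝ × (Fin n → ℝ) =>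
        f 0 p.1 * ∏ i : Fin n, f i.succ (p.2 i) :=
      ((hf 0).comp measurable_fst).mul
        (Finset.measurable_prod _ fun i _ =>
          (hf i.succ).comp ((measurable_pi_apply i).comp measurable_snd))
    have h1 : ∫⁻ x, ∏ i, f i (x i) ∂Measure.pi μ
        = ∫⁻ p, f 0 p.1 * ∏ i : Fin n, f i.succ (p.2 i)
            ∂((μ 0).prod (Measure.pi fun i => μ ((0 : Fin (n+1)).succAbove i))) := by
      rw [← e.lintegral_comp hmeas]
      refine lintegral_congr fun x => ?_
      have hx : MeasurableEquiv.piFinSuccAbove (fun _ : Fin (n+1) => ℝ) 0 x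
          = (x 0, fun j => x ((0 : Fin (n+1)).succAbove j)) := rfl
      rw [hx, Fin.prod_univ_succ]
      simp [Fin.zero_succAbove]
    simp only [Fin.zero_succAbove] at h1
    have h2 := lintegral_prod_mul (μ := μ 0) (ν := Measure.pi fun i => μ i.succ)
      (f := f 0) (g := fun y : Fin n → ℝ => ∏ i : Fin n, f i.succ (y i))
      (hf 0).aemeasurable
      (Finset.measurable_prod _ fun i _ =>
        (hf i.succ).comp (measurable_pi_apply i)).aemeasurable
    rw [h1, h2,
      lintegral_pi_fin (fun i => μ i.succ) (fun i => hσ _) (fun i => f i.succ) (fun i => hf _),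
      Fin.prod_univ_succ]

lemma lintegral_pi_prod {ι : Type*} [Fintype ι] (μ : ι → Measure ℝ) [hσ : ∀ i, SigmaFinite (μ i)]
    (f : ι → ℝ → ℝ≥0∞) (hf : ∀ i, Measurable (f i)) :
    ∫⁻ x, ∏ i, f i (x i) ∂Measure.pi μ = ∏ i, ∫⁻ t, f i t ∂μ i := by
  let e := (Fintype.equivFin ι).symm
  have mp := measurePreserving_piCongrLeft μ e
  have hmeas : Measurable fun x : ι → ℝ => ∏ i, f i (x i) :=
    Finset.measurable_prod _ fun i _ => (hf i).comp (measurable_pi_apply i)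
  rw [← mp.lintegral_comp hmeas]
  have : ∀ y : Fin (Fintype.card ι) → ℝ,
      ∏ i, f i ((MeasurableEquiv.piCongrLeft (fun _ => ℝ) e) y i)
        = ∏ j, f (e j) (y j) := by
    intro y
    rw [← e.prod_comp (fun i => f i ((MeasurableEquiv.piCongrLeft (fun _ => ℝ) e) y i))]
    refine Finset.prod_congr rfl fun j _ => ?_
    rw [MeasurableEquiv.coe_piCongrLeft, Equiv.piCongrLeft_apply_apply]
  simp_rw [this]
  rw [lintegral_pi_fin (fun j => μ (e j)) (fun j => hσ _) (fun j => f (e j)) (fun j => hf _),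
    ← e.prod_comp (fun i => ∫⁻ t, f i t ∂μ i)]

lemma stdGaussianPi_eq_withDensity (ι : Type*) [Fintype ι] :
    (Measure.pi fun _ : ι => gaussianReal 0 1)
      = (volume : Measure (ι → ℝ)).withDensity (fun x => ∏ i, gaussianPDF 0 1 (x i)) := by
  refine Measure.pi_eq fun s hs => ?_
  have hind : ∀ x : ι → ℝ,
      (Set.univ.pi s).indicator (fun x : ι → ℝ => ∏ i, gaussianPDF 0 1 (x i)) x
        = ∏ i, (s i).indicator (gaussianPDF 0 1) (x i) := by
    intro x
    by_cases hx : x ∈ Set.univ.pi s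
    · rw [Set.indicator_of_mem hx]
      exact Finset.prod_congr rfl fun i _ =>
        (Set.indicator_of_mem (hx i trivial) _).symm
    · rw [Set.indicator_of_notMem hx]
      obtain ⟨i, hi⟩ : ∃ i, x i ∉ s i := by simpa [Set.mem_pi] using hx
      exact (Finset.prod_eq_zero (Finset.mem_univ i) (Set.indicator_of_notMem hi _)).symm
  rw [withDensity_apply _ (MeasurableSet.univ_pi hs),
    ← lintegral_indicator (MeasurableSet.univ_pi hs) _]
  simp_rw [hind]
  rw [volume_pi,
    lintegral_pi_prod _ _ (fun i => (measurable_gaussianPDF 0 1).indicator (hs i))]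
  refine Finset.prod_congr rfl fun i _ => ?_
  rw [lintegral_indicator (hs i) _, ← withDensity_apply _ (hs i),
    ← gaussianReal_of_var_ne_zero 0 one_ne_zero]

lemma prod_gaussianPDF {ι : Type*} [Fintype ι] (v : ι → ℝ) :
    ∏ i, gaussianPDF 0 1 (v i)
      = ENNReal.ofReal ((Real.sqrt (2 * Real.pi))⁻¹ ^ Fintype.card ι
          * Real.exp ((-∑ i, v i ^ 2) / 2)) := by
  simp only [gaussianPDF]
  rw [← ENNReal.ofReal_prod_of_nonneg (fun i _ => gaussianPDFReal_nonneg 0 1 (v i))]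
  congr 1
  simp only [gaussianPDFReal, NNReal.coe_one, mul_one, sub_zero]
  rw [Finset.prod_mul_distrib, Finset.prod_const, Finset.card_univ, ← Real.exp_sum]
  congr 1
  rw [← Finset.sum_div, ← Finset.sum_neg_distrib]

lemma map_mulVec_stdGaussianPi {ι : Type*} [Fintype ι] [DecidableEq ι]
    {U : Matrix ι ι ℝ} (hU : U * Uᵀ = 1) :
    (Measure.pi fun _ : ι => gaussianReal 0 1).map U.mulVec
      = Measure.pi fun _ : ι => gaussianReal 0 1 := by
  have hdet2 : U.det * U.det = 1 := by
    have h := congrArg Matrix.det hU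
    rwa [Matrix.det_mul, Matrix.det_transpose, Matrix.det_one] at h
  have hdet0 : U.det ≠ 0 := by
    intro H; rw [H, mul_zero] at hdet2; exact zero_ne_one hdet2
  have hUtU : Uᵀ * U = 1 := mul_eq_one_comm.mp hU
  have habs : |U.det| = 1 := by
    rcases mul_self_eq_one_iff.mp hdet2 with H | H <;> simp [H]
  have hvol : (volume : Measure (ι → ℝ)).map U.mulVec = volume := by
    have hlin : ⇑(Matrix.toLin' U) = U.mulVec := by
      funext x; exact Matrix.toLin'_apply U x
    rw [← hlin, Real.map_matrix_volume_pi_eq_smul_volume_pi hdet0]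
    have h1 : |U.det⁻¹| = 1 := by rw [abs_inv, habs]; norm_num
    rw [h1]
    simp
  have hsq : ∀ x : ι → ℝ, ∑ i, (U.mulVec x i) ^ 2 = ∑ i, (x i) ^ 2 := by
    intro x
    have h1 : U.mulVec x ⬝ᵥ U.mulVec x = x ⬝ᵥ x := by
      rw [Matrix.dotProduct_mulVec, ← Matrix.mulVec_transpose,
        Matrix.mulVec_mulVec, hUtU, Matrix.one_mulVec]
    simpa [dotProduct, sq] using h1
  have hg : (fun x : ι → ℝ => ∏ i, gaussianPDF 0 1 (U.mulVec x i))
      = fun x : ι → ℝ => ∏ i, gaussianPDF 0 1 (x i) := by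
    funext x
    rw [prod_gaussianPDF, prod_gaussianPDF, hsq]
  have hgm : Measurable fun x : ι → ℝ => ∏ i, gaussianPDF 0 1 (x i) :=
    Finset.measurable_prod _ fun i _ =>
      (measurable_gaussianPDF 0 1).comp (measurable_pi_apply i)
  rw [stdGaussianPi_eq_withDensity, ← hg,
    map_withDensity_comp _ (measurable_mulVec' U) hgm, hvol, hg]

instance stdGaussian_probMeasure (d : ℕ) : IsProbabilityMeasure (stdGaussian d) := by
  unfold _root_.stdGaussian; infer_instance

lemma map_prodStdGaussian {d : ℕ} (R s' X Y : Matrix (Fin d) (Fin d) ℝ)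
    (hW : Matrix.fromBlocks R s' X Y * (Matrix.fromBlocks R s' X Y)ᵀ = 1) :
    ((stdGaussian d).prod (stdGaussian d)).map
        (fun p : (Fin d → ℝ) × (Fin d → ℝ) => R.mulVec p.1 + s'.mulVec p.2)
      = stdGaussian d := by
  set W := Matrix.fromBlocks R s' X Y with hWdef
  set T : (Fin d → ℝ) × (Fin d → ℝ) → (Fin d → ℝ) :=
    fun p => R.mulVec p.1 + s'.mulVec p.2 with hTdef
  have hT : Measurable T :=
    ((measurable_mulVec' R).comp measurable_fst).add
      ((measurable_mulVec' s').comp measurable_snd)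
  have mp : MeasurePreserving
      (MeasurableEquiv.sumPiEquivProdPi (fun _ : Fin d ⊕ Fin d => ℝ))
      (Measure.pi fun _ : Fin d ⊕ Fin d => gaussianReal 0 1)
      ((stdGaussian d).prod (stdGaussian d)) :=
    measurePreserving_sumPiEquivProdPi (fun _ => gaussianReal 0 1)
  set e := MeasurableEquiv.sumPiEquivProdPi (fun _ : Fin d ⊕ Fin d => ℝ) with hedef
  have hproj : Measurable fun y : (Fin d ⊕ Fin d) → ℝ => (fun i => y (Sum.inl i)) :=
    measurable_pi_lambda _ fun i => measurable_pi_apply _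
  have hcomp1 : (fun x : (Fin d ⊕ Fin d) → ℝ => T (e x))
      = fun x => (fun i => (W.mulVec x) (Sum.inl i)) := by
    funext x
    have hb := Matrix.fromBlocks_mulVec R s' X Y x
    rw [← hWdef] at hb
    funext i
    rw [hb]
    simp only [hTdef, hedef, MeasurableEquiv.sumPiEquivProdPi, Equiv.sumPiEquivProdPi,
      Sum.elim_inl, MeasurableEquiv.coe_mk, Equiv.coe_fn_mk, Pi.add_apply]
    rfl
  calc ((stdGaussian d).prod (stdGaussian d)).map T
      = ((Measure.pi fun _ : Fin d ⊕ Fin d => gaussianReal 0 1).map e).map T := by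
        rw [mp.map_eq]
    _ = (Measure.pi fun _ : Fin d ⊕ Fin d => gaussianReal 0 1).map (fun x => T (e x)) := by
        rw [Measure.map_map hT e.measurable]; rfl
    _ = (Measure.pi fun _ : Fin d ⊕ Fin d => gaussianReal 0 1).map
          ((fun y : (Fin d ⊕ Fin d) → ℝ => (fun i => y (Sum.inl i))) ∘ W.mulVec) := by
        rw [hcomp1]; rfl
    _ = (((Measure.pi fun _ : Fin d ⊕ Fin d => gaussianReal 0 1).map W.mulVec)).map
          (fun y => (fun i => y (Sum.inl i))) := by
        rw [Measure.map_map hproj (measurable_mulVec' W)]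
    _ = (Measure.pi fun _ : Fin d ⊕ Fin d => gaussianReal 0 1).map
          (fun y => (fun i => y (Sum.inl i))) := by
        rw [map_mulVec_stdGaussianPi hW]
    _ = ((stdGaussian d).prod (stdGaussian d)).map Prod.fst := by
        rw [← mp.map_eq, Measure.map_map measurable_fst e.measurable]
        rfl
    _ = stdGaussian d := by
        rw [Measure.map_fst_prod]
        simp

end Aux

/-- One step of the unadjusted Langevin algorithm for the quadratic potential
`V(x) = ½ (x-m)ᵀ Σ⁻¹ (x-m)` maps the Gaussian `N(m_k, Σ_k)` to `N(m_{k+1}, Σ_{k+1})`, where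
`m_{k+1} - m = (I - hΣ⁻¹)(m_k - m)` and `Σ_{k+1} = (I - hΣ⁻¹) Σ_k (I - hΣ⁻¹) + 2h I`. -/
theorem statement2
    (d : ℕ) (h : ℝ) (hh0 : 0 < h)
    (S : Matrix (Fin d) (Fin d) ℝ) (hS : S.PosDef)
    (m mk : Fin d → ℝ)
    (Sk : Matrix (Fin d) (Fin d) ℝ) (hSk : Sk.PosSemidef)
    (mk1 : Fin d → ℝ) (hmk1 : mk1 - m = (1 - h • S⁻¹).mulVec (mk - m))
    (Sk1 : Matrix (Fin d) (Fin d) ℝ)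
    (hSk1 : Sk1 = (1 - h • S⁻¹) * Sk * (1 - h • S⁻¹) + (2 * h) • 1) :
    ∃ hpsd : Sk1.PosSemidef,
      langevinKernel h (fun x => S⁻¹.mulVec (x - m)) (gaussianPi mk hSk) =
        gaussianPi mk1 hpsd := by
  have hd2 : (0:ℝ) < 2 * h := by linarith
  set c := Real.sqrt (2 * h) with hcdef
  have hc0 : c ≠ 0 := ne_of_gt (Real.sqrt_pos.mpr hd2)
  have hc2 : c * c = 2 * h := Real.mul_self_sqrt hd2.le
  have hSt : Sᵀ = S := by
    have h1 := hS.1.eq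
    rwa [Matrix.conjTranspose_eq_transpose_of_trivial] at h1
  have hSit : (S⁻¹)ᵀ = S⁻¹ := by rw [Matrix.transpose_nonsing_inv, hSt]
  set A := (1 : Matrix (Fin d) (Fin d) ℝ) - h • S⁻¹ with hAdef
  have hAt : Aᵀ = A := by
    rw [hAdef, Matrix.transpose_sub, Matrix.transpose_one, Matrix.transpose_smul, hSit]
  have hAh : Aᴴ = A := by rw [Matrix.conjTranspose_eq_transpose_of_trivial, hAt]
  set B := hSk.sqrt with hBdef
  have hBh : Bᴴ = B := hSk.isHermitian_sqrt'
  have hBt : Bᵀ = B := by rw [← Matrix.conjTranspose_eq_transpose_of_trivial, hBh]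
  have hBB : B * B = Sk := hSk.sqrt_mul_self'
  have hsmul1 : ((2*h) • (1 : Matrix (Fin d) (Fin d) ℝ)).PosDef := by
    rw [Matrix.smul_one_eq_diagonal]
    exact Matrix.PosDef.diagonal fun _ => hd2
  have hASA : (A * Sk * A).PosSemidef := by
    have h1 := hSk.mul_mul_conjTranspose_same A
    rwa [hAh] at h1
  have hpd : Sk1.PosDef := by
    rw [hSk1]
    exact Matrix.PosDef.posSemidef_add hASA hsmul1
  refine ⟨hpd.posSemidef, ?_⟩
  set Q := hpd.posSemidef.sqrt with hQdef
  have hQh : Qᴴ = Q := hpd.posSemidef.isHermitian_sqrt'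
  have hQt : Qᵀ = Q := by rw [← Matrix.conjTranspose_eq_transpose_of_trivial, hQh]
  have hQQ : Q * Q = Sk1 := hpd.posSemidef.sqrt_mul_self'
  have hQdet : Q.det ≠ 0 := by
    have h1 : Q.det * Q.det = Sk1.det := by rw [← Matrix.det_mul, hQQ]
    intro H
    rw [H, mul_zero] at h1
    exact hpd.det_pos.ne' h1.symm
  have hQi : Q * Q⁻¹ = 1 := Matrix.mul_nonsing_inv Q (isUnit_iff_ne_zero.mpr hQdet)
  have hQi' : Q⁻¹ * Q = 1 := Matrix.nonsing_inv_mul Q (isUnit_iff_ne_zero.mpr hQdet)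
  have hQit : (Q⁻¹)ᵀ = Q⁻¹ := by rw [Matrix.transpose_nonsing_inv, hQt]
  set M := A * B with hMdef
  set R := Q⁻¹ * M with hRdef
  set s' := c • Q⁻¹ with hsdef
  set N := c⁻¹ • (Q * R) with hNdef
  set G := (1 : Matrix (Fin d) (Fin d) ℝ) + Nᵀ * N with hGdef
  have hNN : (Nᵀ * N).PosSemidef := by
    have h1 := Matrix.posSemidef_conjTranspose_mul_self N
    rwa [Matrix.conjTranspose_eq_transpose_of_trivial] at h1
  have h1pd : (1 : Matrix (Fin d) (Fin d) ℝ).PosDef := by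
    rw [← Matrix.diagonal_one]
    exact Matrix.PosDef.diagonal fun _ => one_pos
  have hG : G.PosDef := Matrix.PosDef.add_posSemidef h1pd hNN
  set P := hG.posSemidef.sqrt with hPdef
  have hPh : Pᴴ = P := hG.posSemidef.isHermitian_sqrt'
  have hPt : Pᵀ = P := by rw [← Matrix.conjTranspose_eq_transpose_of_trivial, hPh]
  have hPP : P * P = G := hG.posSemidef.sqrt_mul_self'
  have hPdet : P.det ≠ 0 := by
    have h1 : P.det * P.det = G.det := by rw [← Matrix.det_mul, hPP]
    intro H
    rw [H, mul_zero] at h1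
    exact hG.det_pos.ne' h1.symm
  have hPi : P * P⁻¹ = 1 := Matrix.mul_nonsing_inv P (isUnit_iff_ne_zero.mpr hPdet)
  have hPi' : P⁻¹ * P = 1 := Matrix.nonsing_inv_mul P (isUnit_iff_ne_zero.mpr hPdet)
  have hPit : (P⁻¹)ᵀ = P⁻¹ := by rw [Matrix.transpose_nonsing_inv, hPt]
  set X := P⁻¹ with hXdef
  set Y := -(X * Nᵀ) with hYdef
  have hRt : Rᵀ = Mᵀ * Q⁻¹ := by rw [hRdef, Matrix.transpose_mul, hQit]
  have hst : s'ᵀ = s' := by rw [hsdef, Matrix.transpose_smul, hQit]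
  have hXt : Xᵀ = X := hPit
  have hYt : Yᵀ = -(N * X) := by
    rw [hYdef, Matrix.transpose_neg, Matrix.transpose_mul, Matrix.transpose_transpose, hXt]
  have hNt : Nᵀ = c⁻¹ • (Rᵀ * Q) := by
    rw [hNdef, Matrix.transpose_smul, Matrix.transpose_mul, hQt]
  have hMMt : M * Mᵀ = A * Sk * A := by
    rw [hMdef, Matrix.transpose_mul, hBt, hAt,
      show A * B * (B * A) = A * (B * B) * A from by noncomm_ring, hBB]
  have hkey : M * Mᵀ + (2*h) • (1 : Matrix (Fin d) (Fin d) ℝ) = Q * Q := by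
    rw [hMMt, hQQ, hSk1]
  have h11 : R * Rᵀ + s' * s'ᵀ = 1 := by
    have e1 : R * Rᵀ = Q⁻¹ * (M * Mᵀ) * Q⁻¹ := by
      rw [hRt, hRdef]; noncomm_ring
    have e2 : s' * s'ᵀ = (2*h) • (Q⁻¹ * Q⁻¹) := by
      rw [hst, hsdef, smul_mul_assoc, mul_smul_comm, smul_smul, hc2]
    have e3 : Q⁻¹ * (Q * Q) * Q⁻¹ = 1 := by
      rw [show Q⁻¹ * (Q * Q) * Q⁻¹ = (Q⁻¹ * Q) * (Q * Q⁻¹) from by noncomm_ring,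
        hQi', hQi, one_mul]
    calc R * Rᵀ + s' * s'ᵀ
        = Q⁻¹ * (M * Mᵀ) * Q⁻¹ + (2*h) • (Q⁻¹ * Q⁻¹) := by rw [e1, e2]
      _ = Q⁻¹ * (M * Mᵀ + (2*h) • 1) * Q⁻¹ := by
          rw [Matrix.mul_add, Matrix.add_mul, mul_smul_comm, mul_one, smul_mul_assoc]
      _ = 1 := by rw [hkey, e3]
  have hsN : s' * N = R := by
    rw [hsdef, hNdef, smul_mul_assoc, mul_smul_comm, smul_smul, mul_inv_cancel₀ hc0,
      one_smul, ← mul_assoc, hQi', one_mul]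
  have h12 : R * Xᵀ + s' * Yᵀ = 0 := by
    rw [hXt, hYt, mul_neg, ← mul_assoc, hsN, add_neg_cancel]
  have hNs : Nᵀ * s'ᵀ = Rᵀ := by
    rw [hNt, hst, hsdef, smul_mul_assoc, mul_smul_comm, smul_smul, inv_mul_cancel₀ hc0,
      one_smul, mul_assoc, hQi, mul_one]
  have h21 : X * Rᵀ + Y * s'ᵀ = 0 := by
    rw [hYdef, neg_mul, mul_assoc, hNs, add_neg_cancel]
  have h22 : X * Xᵀ + Y * Yᵀ = 1 := by
    have e0 : Y * Yᵀ = X * (Nᵀ * N) * X := by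
      rw [hYdef, hYt, neg_mul_neg]; noncomm_ring
    have e : X * G * X = X * X + X * (Nᵀ * N) * X := by
      rw [hGdef, Matrix.mul_add, mul_one, Matrix.add_mul]
    have e3 : P⁻¹ * (P * P) * P⁻¹ = 1 := by
      rw [show P⁻¹ * (P * P) * P⁻¹ = (P⁻¹ * P) * (P * P⁻¹) from by noncomm_ring,
        hPi', hPi, one_mul]
    rw [hXt, e0, ← e, hXdef, ← hPP, e3]
  have hW : Matrix.fromBlocks R s' X Y * (Matrix.fromBlocks R s' X Y)ᵀ = 1 := by
    rw [Matrix.fromBlocks_transpose, Matrix.fromBlocks_multiply, h11, h12, h21, h22,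
      Matrix.fromBlocks_one]
  -- measure-theoretic part
  have hg1 : Measurable fun z : Fin d → ℝ => mk + B.mulVec z :=
    (measurable_mulVec' B).const_add mk
  have hφ : Measurable fun p : (Fin d → ℝ) × (Fin d → ℝ) =>
      p.1 - h • S⁻¹.mulVec (p.1 - m) + c • p.2 :=
    ((measurable_fst.sub (((measurable_mulVec' S⁻¹).comp
      (measurable_fst.sub measurable_const)).const_smul h))).add (measurable_snd.const_smul c)
  have hmk1' : mk1 = mk - h • (S⁻¹.mulVec (mk - m)) := by
    have h2 := hmk1
    rw [Matrix.sub_mulVec, Matrix.one_mulVec, Matrix.smul_mulVec] at h2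
    have h3 : mk1 - m = mk - h • (S⁻¹.mulVec (mk - m)) - m := by rw [h2]; abel
    exact sub_left_inj.mp h3
  have step1 : langevinKernel h (fun x => S⁻¹.mulVec (x - m)) (gaussianPi mk hSk)
      = ((stdGaussian d).prod (stdGaussian d)).map
          (fun p : (Fin d → ℝ) × (Fin d → ℝ) => mk1 + (M.mulVec p.1 + c • p.2)) := by
    unfold langevinKernel gaussianPi
    rw [← hcdef, ← hBdef]
    have hprod : ((stdGaussian d).map (fun z => mk + B.mulVec z)).prod (stdGaussian d)
        = ((stdGaussian d).prod (stdGaussian d)).map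
            (Prod.map (fun z => mk + B.mulVec z) id) := by
      have h4 := Measure.map_prod_map (stdGaussian d) (stdGaussian d) hg1
        (measurable_id (α := Fin d → ℝ))
      rw [Measure.map_id] at h4
      exact h4
    rw [hprod, Measure.map_map hφ (hg1.prodMap measurable_id)]
    congr 1
    funext p
    simp only [Function.comp_apply, Prod.map_apply, id_eq]
    show (mk + B.mulVec p.1) - h • (S⁻¹.mulVec ((mk + B.mulVec p.1) - m)) + c • p.2
        = mk1 + (M.mulVec p.1 + c • p.2)
    have hexp1 : S⁻¹.mulVec ((mk + B.mulVec p.1) - m)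
        = S⁻¹.mulVec (mk - m) + S⁻¹.mulVec (B.mulVec p.1) := by
      rw [show (mk + B.mulVec p.1) - m = (mk - m) + B.mulVec p.1 from by abel,
        Matrix.mulVec_add]
    have hexp2 : M.mulVec p.1 = B.mulVec p.1 - h • S⁻¹.mulVec (B.mulVec p.1) := by
      rw [hMdef, hAdef, Matrix.sub_mul, one_mul, smul_mul_assoc, Matrix.sub_mulVec,
        Matrix.smul_mulVec, ← Matrix.mulVec_mulVec]
    rw [hexp1, hexp2, hmk1', smul_add]
    abel
  have hT : Measurable fun p : (Fin d → ℝ) × (Fin d → ℝ) => R.mulVec p.1 + s'.mulVec p.2 :=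
    ((measurable_mulVec' R).comp measurable_fst).add
      ((measurable_mulVec' s').comp measurable_snd)
  have hQR : Q * R = M := by rw [hRdef, ← mul_assoc, hQi, one_mul]
  have hfac : (fun p : (Fin d → ℝ) × (Fin d → ℝ) => mk1 + (M.mulVec p.1 + c • p.2))
      = (fun v : Fin d → ℝ => mk1 + Q.mulVec v)
          ∘ (fun p : (Fin d → ℝ) × (Fin d → ℝ) => R.mulVec p.1 + s'.mulVec p.2) := by
    funext p
    simp only [Function.comp_apply]
    congr 1
    rw [Matrix.mulVec_add, Matrix.mulVec_mulVec, hQR, hsdef, Matrix.smul_mulVec,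
      Matrix.mulVec_smul, Matrix.mulVec_mulVec, hQi, Matrix.one_mulVec]
  have hmap2 : Measurable fun v : Fin d → ℝ => mk1 + Q.mulVec v :=
    (measurable_mulVec' Q).const_add mk1
  rw [step1, hfac, ← Measure.map_map hmap2 hT, map_prodStdGaussian R s' X Y hW]
  rfl
end

section
/- Let Σ be a symmetric positive-definite d×d real matrix with α·I ⪯ Σ^{-1} ⪯ β·I for some 0 < α ≤ β, and fix 0 < h ≤ 1/β. Let Σ_0 be any symmetric positive-semidefinite d×d matrix and define recursively Σ_{k+1} = (I − hΣ^{-1})·Σ_k·(I − hΣ^{-1}) + 2h·I. Then as k → ∞, Σ_k converges in operator norm to Σ_∞ := 2h·(I − (I − hΣ^{-1})²)^{-1}, this limit equals Σ·(I − (h/2)Σ^{-1})^{-1}, and Σ_∞ satisfies the fixed-point equation Σ_∞ = (I − hΣ^{-1})·Σ_∞·(I − hΣ^{-1}) + 2h·I. -/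
open Filter

section Aux
open Matrix

variable {d : ℕ}

lemma psdSmul {M : Matrix (Fin d) (Fin d) ℝ} (hM : M.PosSemidef) {c : ℝ} (hc : 0 ≤ c) :
    (c • M).PosSemidef := by
  exact hM.smul hc

lemma pdSmul {M : Matrix (Fin d) (Fin d) ℝ} (hM : M.PosDef) {c : ℝ} (hc : 0 < c) :
    (c • M).PosDef := by
  exact hM.smul hc

lemma eig_le {A : Matrix (Fin d) (Fin d) ℝ} (hA : A.IsHermitian) {r : ℝ}
    (hr : (r • (1 : Matrix (Fin d) (Fin d) ℝ) - A).PosSemidef) (i : Fin d) :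
    hA.eigenvalues i ≤ r := by
  set v : Fin d → ℝ := ⇑(hA.eigenvectorBasis i) with hv
  have hv0 : v ≠ 0 := by
    intro hz
    have := hA.eigenvectorBasis.toBasis.ne_zero i
    rw [OrthonormalBasis.coe_toBasis] at this
    apply this
    ext j
    exact congrFun hz j
  have hpos : 0 < dotProduct v v := by
    have := (Matrix.dotProduct_star_self_pos_iff (v := v)).mpr hv0
    simpa using this
  have key := hr.dotProduct_mulVec_nonneg v
  have hmv : A *ᵥ v = hA.eigenvalues i • v := hA.mulVec_eigenvectorBasis i
  rw [Matrix.sub_mulVec, Matrix.smul_mulVec, Matrix.one_mulVec, hmv] at key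
  rw [dotProduct_sub, dotProduct_smul, dotProduct_smul] at key
  simp only [star_trivial, smul_eq_mul] at key
  nlinarith [key, hpos]

end Aux

/-- Convergence of the covariance recursion of the unadjusted Langevin algorithm for a
Gaussian target: `Σ_{k+1} = (I - hΣ⁻¹) Σ_k (I - hΣ⁻¹) + 2h I` converges to
`Σ_∞ = 2h (I - (I - hΣ⁻¹)²)⁻¹ = Σ (I - (h/2) Σ⁻¹)⁻¹`, which is a fixed point. -/
theorem statement3
    (d : ℕ) (α β h : ℝ) (hα : 0 < α) (hαβ : α ≤ β) (hh0 : 0 < h) (hh : h ≤ 1 / β)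
    (S : Matrix (Fin d) (Fin d) ℝ) (hS : S.PosDef)
    (hlow : (S⁻¹ - α • 1).PosSemidef)
    (hhigh : ((β • 1 : Matrix (Fin d) (Fin d) ℝ) - S⁻¹).PosSemidef)
    (S0 : Matrix (Fin d) (Fin d) ℝ) (hS0 : S0.PosSemidef)
    (Sk : ℕ → Matrix (Fin d) (Fin d) ℝ)
    (hSk0 : Sk 0 = S0)
    (hSkrec : ∀ k, Sk (k + 1) = (1 - h • S⁻¹) * Sk k * (1 - h • S⁻¹) + (2 * h) • 1)
    (Sinf : Matrix (Fin d) (Fin d) ℝ)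
    (hSinf : Sinf = (2 * h) • (1 - (1 - h • S⁻¹) ^ 2)⁻¹) :
    Tendsto Sk atTop (nhds Sinf) ∧
    Sinf = S * (1 - (h / 2) • S⁻¹)⁻¹ ∧
    Sinf = (1 - h • S⁻¹) * Sinf * (1 - h • S⁻¹) + (2 * h) • 1 := by
  have hβ : 0 < β := lt_of_lt_of_le hα hαβ
  have hhβ : h * β ≤ 1 := by
    have := mul_le_mul_of_nonneg_right hh hβ.le
    rwa [one_div, inv_mul_cancel₀ hβ.ne'] at this
  have hhα : h * α ≤ 1 := le_trans (by nlinarith) hhβ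
  set B : Matrix (Fin d) (Fin d) ℝ := S⁻¹ with hBdef
  set A : Matrix (Fin d) (Fin d) ℝ := 1 - h • B with hAdef
  set C : Matrix (Fin d) (Fin d) ℝ := 1 - (h / 2) • B with hCdef
  -- basic matrix facts
  have hdetS : IsUnit S.det := isUnit_iff_ne_zero.mpr hS.det_pos.ne'
  have hBS : B * S = 1 := Matrix.nonsing_inv_mul S hdetS
  have hSB : S * B = 1 := Matrix.mul_nonsing_inv S hdetS
  -- positivity facts
  have hApsd : A.PosSemidef := by
    have e : A = h • ((β • 1 : Matrix (Fin d) (Fin d) ℝ) - B) + (1 - h * β) • 1 := by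
      rw [hAdef, smul_sub, smul_smul, sub_smul, one_smul]
      abel
    rw [e]
    exact (psdSmul hhigh hh0.le).add (psdSmul Matrix.PosSemidef.one (by linarith))
  have hAh : A.IsHermitian := hApsd.1
  have hrApsd : ((1 - h * α) • (1 : Matrix (Fin d) (Fin d) ℝ) - A).PosSemidef := by
    have e : (1 - h * α) • (1 : Matrix (Fin d) (Fin d) ℝ) - A = h • (B - α • 1) := by
      rw [hAdef, smul_sub, smul_smul, sub_smul, one_smul]
      abel
    rw [e]
    exact psdSmul hlow hh0.le
  have hCpd : C.PosDef := by
    have e : C = (h / 2) • ((β • 1 : Matrix (Fin d) (Fin d) ℝ) - B) + (1 - h * β / 2) • 1 := by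
      rw [hCdef, smul_sub, smul_smul, sub_smul, one_smul]
      rw [show h / 2 * β = h * β / 2 by ring]
      abel
    rw [e]
    exact Matrix.PosDef.posSemidef_add (psdSmul hhigh (by linarith)) (pdSmul Matrix.PosDef.one (by linarith))
  have hdetC : IsUnit C.det := isUnit_iff_ne_zero.mpr hCpd.det_pos.ne'
  have hCC : C * C⁻¹ = 1 := Matrix.mul_nonsing_inv C hdetC
  have hCC' : C⁻¹ * C = 1 := Matrix.nonsing_inv_mul C hdetC
  -- the matrix M = 1 - A²
  set M : Matrix (Fin d) (Fin d) ℝ := 1 - A ^ 2 with hMdef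
  have hM : M = (2 * h) • (B * C) := by
    rw [hMdef, hAdef, hCdef, sq]
    simp only [mul_sub, sub_mul, mul_one, one_mul, Matrix.mul_smul, Matrix.smul_mul,
      smul_smul, smul_sub]
    module
  have h2h : (2 * h) ≠ 0 := by positivity
  have hMinv : M * ((2 * h)⁻¹ • (C⁻¹ * S)) = 1 := by
    rw [hM, Matrix.smul_mul, Matrix.mul_smul, smul_smul, mul_inv_cancel₀ h2h, one_smul]
    calc B * C * (C⁻¹ * S) = B * (C * C⁻¹) * S := by
          rw [mul_assoc, mul_assoc, mul_assoc]
      _ = 1 := by rw [hCC, mul_one, hBS]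
  have hdetM : IsUnit M.det := Matrix.isUnit_det_of_right_inverse hMinv
  have hMeq : M⁻¹ = (2 * h)⁻¹ • (C⁻¹ * S) := Matrix.inv_eq_right_inv hMinv
  have hMM : M * M⁻¹ = 1 := Matrix.mul_nonsing_inv M hdetM
  have hMM' : M⁻¹ * M = 1 := Matrix.nonsing_inv_mul M hdetM
  -- Sinf = C⁻¹ * S
  have hSinf' : Sinf = C⁻¹ * S := by
    rw [hSinf, hMeq, smul_smul, mul_inv_cancel₀ h2h, one_smul]
  -- second claim
  have claim2 : Sinf = S * C⁻¹ := by
    have hSC : S * C = C * S := by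
      rw [hCdef, mul_sub, sub_mul, mul_one, one_mul, Matrix.mul_smul, Matrix.smul_mul, hSB, hBS]
    have hcomm : C⁻¹ * S = S * C⁻¹ := by
      have e1 : C⁻¹ * (S * C) * C⁻¹ = C⁻¹ * (C * S) * C⁻¹ := by rw [hSC]
      calc C⁻¹ * S = C⁻¹ * S * (C * C⁻¹) := by rw [hCC, mul_one]
        _ = C⁻¹ * (S * C) * C⁻¹ := by simp only [mul_assoc]
        _ = C⁻¹ * (C * S) * C⁻¹ := e1
        _ = (C⁻¹ * C) * (S * C⁻¹) := by simp only [mul_assoc]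
        _ = S * C⁻¹ := by rw [hCC', one_mul]
    rw [hSinf', hcomm]
  -- third claim (fixed point)
  have hAM : A * M = M * A := by rw [hMdef]; noncomm_ring
  have hAMinv : A * M⁻¹ = M⁻¹ * A := by
    calc A * M⁻¹ = (M⁻¹ * M) * (A * M⁻¹) := by rw [hMM', one_mul]
      _ = M⁻¹ * (M * A) * M⁻¹ := by rw [mul_assoc, ← mul_assoc M A M⁻¹, ← mul_assoc]
      _ = M⁻¹ * (A * M) * M⁻¹ := by rw [hAM]
      _ = (M⁻¹ * A) * (M * M⁻¹) := by rw [mul_assoc, mul_assoc, mul_assoc]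
      _ = M⁻¹ * A := by rw [hMM, mul_one]
  have claim3 : Sinf = A * Sinf * A + (2 * h) • 1 := by
    have key : M⁻¹ * A ^ 2 + 1 = M⁻¹ := by
      have : M⁻¹ * A ^ 2 + M⁻¹ * M = M⁻¹ := by rw [hMdef]; noncomm_ring
      rwa [hMM'] at this
    have hSinfM : Sinf = (2 * h) • M⁻¹ := by rw [hSinf, hMdef]
    rw [hSinfM, Matrix.mul_smul, Matrix.smul_mul, hAMinv, mul_assoc, ← sq, ← smul_add, key]
  refine ⟨?_, claim2, claim3⟩
  -- convergence
  -- eigenvalues of A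
  set μ : Fin d → ℝ := hAh.eigenvalues with hμdef
  have hμ0 : ∀ i, 0 ≤ μ i := fun i => hApsd.eigenvalues_nonneg i
  have hμr : ∀ i, μ i ≤ 1 - h * α := fun i => eig_le hAh hrApsd i
  set U : Matrix (Fin d) (Fin d) ℝ := (hAh.eigenvectorUnitary : Matrix (Fin d) (Fin d) ℝ)
    with hUdef
  have hUU : U * star U = 1 := (Matrix.mem_unitaryGroup_iff).mp hAh.eigenvectorUnitary.2
  have hUU' : star U * U = 1 := (Matrix.mem_unitaryGroup_iff').mp hAh.eigenvectorUnitary.2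
  have hspec : A = U * Matrix.diagonal μ * star U := by
    have := hAh.spectral_theorem
    rwa [show (RCLike.ofReal ∘ hAh.eigenvalues : Fin d → ℝ) = μ from by
      funext i; simp [hμdef]] at this
  have hpow : ∀ k, A ^ k = U * (Matrix.diagonal μ) ^ k * star U := by
    intro k
    induction k with
    | zero => simp [pow_zero, hUU]
    | succ k ih =>
      rw [pow_succ, ih, hspec, pow_succ]
      calc U * Matrix.diagonal μ ^ k * star U * (U * Matrix.diagonal μ * star U)
          = U * Matrix.diagonal μ ^ k * (star U * U) * Matrix.diagonal μ * star U := by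
            simp only [mul_assoc]
        _ = U * (Matrix.diagonal μ ^ k * Matrix.diagonal μ) * star U := by
            rw [hUU']; simp only [mul_one, mul_assoc]
  -- tendsto of diagonal powers
  have htendD : Tendsto (fun k => (Matrix.diagonal μ) ^ k) atTop
      (nhds (0 : Matrix (Fin d) (Fin d) ℝ)) := by
    simp only [Matrix.diagonal_pow]
    have hdiag : Continuous fun v : Fin d → ℝ => Matrix.diagonal v :=
      continuous_id.matrix_diagonal
    have hv : Tendsto (fun k => μ ^ k) atTop (nhds (0 : Fin d → ℝ)) := by
      rw [tendsto_pi_nhds]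
      intro i
      have : Tendsto (fun k => (μ i) ^ k) atTop (nhds 0) :=
        tendsto_pow_atTop_nhds_zero_of_lt_one (hμ0 i) (lt_of_le_of_lt (hμr i) (by nlinarith))
      simpa [Pi.pow_apply] using this
    have := (hdiag.tendsto 0).comp hv
    have h0 : Matrix.diagonal (0 : Fin d → ℝ) = 0 := Matrix.diagonal_zero
    rw [h0] at this
    exact this
  have htendA : Tendsto (fun k => A ^ k) atTop (nhds (0 : Matrix (Fin d) (Fin d) ℝ)) := by
    have hcont : Continuous fun X : Matrix (Fin d) (Fin d) ℝ => U * X * star U :=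
      (continuous_const.matrix_mul continuous_id).matrix_mul continuous_const
    have := (hcont.tendsto 0).comp htendD
    rw [show U * (0 : Matrix (Fin d) (Fin d) ℝ) * star U = 0 by simp] at this
    exact this.congr fun k => (hpow k).symm
  -- form of Sk
  have hSkform : ∀ k, Sk k = A ^ k * (S0 - Sinf) * A ^ k + Sinf := by
    intro k
    induction k with
    | zero => simp [hSk0]
    | succ k ih =>
      rw [hSkrec k, ih]
      have e1 : A * (A ^ k * (S0 - Sinf) * A ^ k + Sinf) * A
          = A ^ (k + 1) * (S0 - Sinf) * A ^ (k + 1) + A * Sinf * A := by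
        have hc : A * A ^ k = A ^ k * A := by
          rw [← pow_succ, ← pow_succ']
        simp only [pow_succ, mul_add, add_mul, ← mul_assoc, hc]
      rw [e1, add_assoc, ← claim3]
  -- conclude
  have hcontf : Continuous fun X : Matrix (Fin d) (Fin d) ℝ => X * (S0 - Sinf) * X + Sinf :=
    ((continuous_id.matrix_mul continuous_const).matrix_mul continuous_id).add continuous_const
  have := (hcontf.tendsto 0).comp htendA
  rw [show (0 : Matrix (Fin d) (Fin d) ℝ) * (S0 - Sinf) * 0 + Sinf = Sinf by simp] at this
  exact this.congr fun k => (hSkform k).symm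
end

section
/- Let 0 < α ≤ β and let λ be a real number with 1/β ≤ λ ≤ 1/α, and let 0 < h ≤ 1/β. Then 0 ≤ √(λ/(1 − h/(2λ))) − √λ ≤ √β·h. -/
/-! With `t = h / (2λ) ≤ 1/2`, the convexity bound `1 / (1 - t) ≤ 1 + 2t` gives
`λ / (1 - t) ≤ λ + h`, and the tangent-line bound for `√` at `λ` gives
`√(λ + h) ≤ √λ + h / (2√λ)`; finally `1 / √λ ≤ √β` because `1/β ≤ λ`. -/

namespace Real

lemma le_div_one_sub_div_two_mul {x h : ℝ} (hx : 0 < x) (hh : 0 ≤ h) (hhx : h < 2 * x) :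
    x ≤ x / (1 - h / (2 * x)) := by
  have hden : 0 < 1 - h / (2 * x) := by rw [sub_pos, div_lt_one (by positivity)]; exact hhx
  rw [le_div_iff₀ hden]
  nlinarith [div_nonneg hh (by positivity : (0 : ℝ) ≤ 2 * x)]

lemma div_one_sub_div_two_mul_le_add {x h : ℝ} (hx : 0 < x) (hh : 0 ≤ h) (hhx : h ≤ x) :
    x / (1 - h / (2 * x)) ≤ x + h := by
  have hden : 1 - h / (2 * x) = (2 * x - h) / (2 * x) := by field_simp
  rw [hden, div_div_eq_mul_div, div_le_iff₀ (by linarith)]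
  nlinarith

lemma sqrt_add_le_sqrt_add_div {x y : ℝ} (hx : 0 < x) (hy : 0 ≤ y) :
    √(x + y) ≤ √x + y / (2 * √x) := by
  have hsx : 0 < √x := sqrt_pos.mpr hx
  rw [sqrt_le_left (by positivity)]
  have hsq : (√x + y / (2 * √x)) ^ 2 = x + y + (y / (2 * √x)) ^ 2 := by
    field_simp
    rw [sq_sqrt hx.le]
    ring
  rw [hsq]
  nlinarith [sq_nonneg (y / (2 * √x))]

lemma one_div_sqrt_le_sqrt_of_one_div_le {x b : ℝ} (hb : 0 < b) (hbx : 1 / b ≤ x) :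
    1 / √x ≤ √b := by
  rw [one_div, ← sqrt_inv]
  exact sqrt_le_sqrt (inv_le_of_inv_le₀ hb (by rwa [← one_div]))

end Real

open Real

theorem statement4_general
    (β lam h : ℝ)
    (hlam1 : 1 / β ≤ lam)
    (hh0 : 0 < h) (hh : h ≤ 1 / β) :
    0 ≤ Real.sqrt (lam / (1 - h / (2 * lam))) - Real.sqrt lam ∧
      Real.sqrt (lam / (1 - h / (2 * lam))) - Real.sqrt lam ≤ Real.sqrt β * h := by
  have hβ : 0 < β := one_div_pos.mp (hh0.trans_le hh)
  have hlam : 0 < lam := hh0.trans_le (hh.trans hlam1)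
  have hhlam : h ≤ lam := hh.trans hlam1
  constructor
  · exact sub_nonneg.mpr (sqrt_le_sqrt (le_div_one_sub_div_two_mul hlam hh0.le (by linarith)))
  · calc √(lam / (1 - h / (2 * lam))) - √lam
        ≤ √(lam + h) - √lam := by
          gcongr; exact div_one_sub_div_two_mul_le_add hlam hh0.le hhlam
      _ ≤ h / (2 * √lam) := by linarith [sqrt_add_le_sqrt_add_div hlam hh0.le]
      _ ≤ 1 / √lam * h := by
          rw [one_div_mul_eq_div]; gcongr; linarith [sqrt_pos.mpr hlam]
      _ ≤ √β * h := by gcongr; exact one_div_sqrt_le_sqrt_of_one_div_le hβ hlam1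

/-- Eigenvalue estimate for the biased covariance of the unadjusted Langevin algorithm for a
Gaussian target: for `1/β ≤ λ ≤ 1/α` and `0 < h ≤ 1/β`,
`0 ≤ √(λ/(1 - h/(2λ))) - √λ ≤ √β · h`. -/
theorem statement4
    (α β lam h : ℝ) (hα : 0 < α) (hαβ : α ≤ β)
    (hlam1 : 1 / β ≤ lam) (hlam2 : lam ≤ 1 / α)
    (hh0 : 0 < h) (hh : h ≤ 1 / β) :
    0 ≤ Real.sqrt (lam / (1 - h / (2 * lam))) - Real.sqrt lam ∧
      Real.sqrt (lam / (1 - h / (2 * lam))) - Real.sqrt lam ≤ Real.sqrt β * h :=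
  statement4_general β lam h hlam1 hh0 hh
end

section
/- Let ρ and ρ' be probability measures on ℝ with finite second moments whose means differ by δ > 0, let μ = ρ^{⊗d} and ν = (ρ')^{⊗d} be the d-fold product measures on ℝ^d, and let Q be a d×d orthogonal matrix whose first row is (1/√d, …, 1/√d). Then W_{2,ℓ∞}(Q♯μ, Q♯ν) ≥ √d·δ, where Q♯ denotes the pushforward under x ↦ Qx. -/
open MeasureTheory Matrix

/-- The `W_{2,ℓ∞}` distance between two measures on `ℝ^d`: the infimum over couplings `γ`
of `(∫ |x - y|_∞² dγ)^{1/2}`.  Here the norm on `Fin d → ℝ` is the sup norm. -/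
noncomputable def W2linf {d : ℕ} (μ ν : Measure (Fin d → ℝ)) : ℝ :=
  sInf {r : ℝ | ∃ γ : Measure ((Fin d → ℝ) × (Fin d → ℝ)),
    IsProbabilityMeasure γ ∧ γ.map Prod.fst = μ ∧ γ.map Prod.snd = ν ∧
    r = Real.sqrt (∫ p, ‖p.1 - p.2‖ ^ 2 ∂γ)}

lemma aux_map_eval {d : ℕ} (ρ : Measure ℝ) [IsProbabilityMeasure ρ] (j : Fin d) :
    ((Measure.pi fun _ : Fin d => ρ).map (fun x => x j)) = ρ := by
  ext s hs
  rw [Measure.map_apply (measurable_pi_apply j) hs]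
  rw [← Set.univ_pi_update_univ, Measure.pi_pi]
  rw [Finset.prod_eq_single j (fun b _ hb => by simp [Function.update_of_ne hb]) (by simp)]
  simp

lemma aux_int_eval {d : ℕ} (ρ : Measure ℝ) [IsProbabilityMeasure ρ] (g : ℝ → ℝ)
    (hg : Integrable g ρ) (j : Fin d) :
    Integrable (fun x : Fin d → ℝ => g (x j)) (Measure.pi fun _ : Fin d => ρ) := by
  have h := aux_map_eval ρ j
  refine (integrable_map_measure ?_ (measurable_pi_apply j).aemeasurable).mp ?_
  · rw [h]; exact hg.aestronglyMeasurable
  · rw [h]; exact hg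

lemma aux_integral_eval {d : ℕ} (ρ : Measure ℝ) [IsProbabilityMeasure ρ] (j : Fin d) :
    ∫ x : Fin d → ℝ, x j ∂(Measure.pi fun _ : Fin d => ρ) = ∫ y, y ∂ρ := by
  have h : ∫ y, y ∂((Measure.pi fun _ : Fin d => ρ).map (fun x => x j))
      = ∫ x : Fin d → ℝ, x j ∂(Measure.pi fun _ : Fin d => ρ) :=
    integral_map (measurable_pi_apply j).aemeasurable aestronglyMeasurable_id
  rw [aux_map_eval ρ j] at h
  exact h.symm

lemma aux_int_id (ρ : Measure ℝ) [IsProbabilityMeasure ρ]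
    (hρ2 : Integrable (fun x => x ^ 2) ρ) : Integrable (fun x : ℝ => x) ρ := by
  refine ((hρ2.add (integrable_const 1)).div_const 2).mono'
    measurable_id.aestronglyMeasurable (ae_of_all _ fun x => ?_)
  simp only [Pi.add_apply, Real.norm_eq_abs]
  nlinarith [sq_nonneg (|x| - 1), sq_abs x]

lemma aux_measurable_mulVec {d : ℕ} (Q : Matrix (Fin d) (Fin d) ℝ) : Measurable Q.mulVec := by
  apply measurable_pi_iff.2
  intro i
  simpa [Matrix.mulVec, dotProduct] using
    Finset.measurable_sum Finset.univ (fun j _ => (measurable_pi_apply j).const_mul _)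

lemma aux_orth {d : ℕ} (Q : Matrix (Fin d) (Fin d) ℝ) (hQ : Q.transpose * Q = 1)
    (x : Fin d → ℝ) : (∑ i : Fin d, Q.mulVec x i ^ 2) = ∑ j, (x j) ^ 2 := by
  have h : Q.mulVec x ⬝ᵥ Q.mulVec x = x ⬝ᵥ x := by
    rw [Matrix.dotProduct_mulVec, ← Matrix.mulVec_transpose, Matrix.mulVec_mulVec, hQ,
      Matrix.one_mulVec]
  simpa [dotProduct, sq] using h

lemma aux_norm_sq_le {d : ℕ} (v : Fin d → ℝ) : ‖v‖ ^ 2 ≤ ∑ i, (v i) ^ 2 := by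
  have hnn : (0:ℝ) ≤ ∑ i, (v i) ^ 2 := Finset.sum_nonneg fun i _ => sq_nonneg _
  have h : ‖v‖ ≤ Real.sqrt (∑ i, (v i) ^ 2) := by
    refine (pi_norm_le_iff_of_nonneg (Real.sqrt_nonneg _)).2 fun i => ?_
    rw [Real.norm_eq_abs, ← Real.sqrt_sq_eq_abs]
    exact Real.sqrt_le_sqrt (Finset.single_le_sum (fun j _ => sq_nonneg (v j))
      (Finset.mem_univ i))
  calc ‖v‖ ^ 2 ≤ Real.sqrt (∑ i, (v i) ^ 2) ^ 2 := by
        exact pow_le_pow_left₀ (norm_nonneg _) h 2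
    _ = ∑ i, (v i) ^ 2 := Real.sq_sqrt hnn

/-- No delocalization for rotated product measures: if the means of `ρ` and `ρ'` differ by
`δ > 0` and `Q` is orthogonal with first row `(1/√d, …, 1/√d)`, then the rotated product
measures satisfy `W_{2,ℓ∞}(Q♯ρ^{⊗d}, Q♯ρ'^{⊗d}) ≥ √d · δ`. -/
theorem statement7
    (d : ℕ) (hd : 0 < d)
    (ρ ρ' : Measure ℝ) (hρ : IsProbabilityMeasure ρ) (hρ' : IsProbabilityMeasure ρ')
    (hρ2 : Integrable (fun x => x ^ 2) ρ) (hρ'2 : Integrable (fun x => x ^ 2) ρ')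
    (δ : ℝ) (hδ : 0 < δ)
    (hmean : |(∫ x, x ∂ρ) - ∫ x, x ∂ρ'| = δ)
    (Q : Matrix (Fin d) (Fin d) ℝ) (hQ : Q.transpose * Q = 1)
    (hrow : ∀ j, Q ⟨0, hd⟩ j = 1 / Real.sqrt d) :
    Real.sqrt d * δ ≤
      W2linf ((Measure.pi fun _ : Fin d => ρ).map Q.mulVec)
        ((Measure.pi fun _ : Fin d => ρ').map Q.mulVec) := by
  classical
  set μ : Measure (Fin d → ℝ) := Measure.pi fun _ : Fin d => ρ with hμdef
  set ν : Measure (Fin d → ℝ) := Measure.pi fun _ : Fin d => ρ' with hνdef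
  have hTmeas : Measurable Q.mulVec := aux_measurable_mulVec Q
  set i0 : Fin d := ⟨0, hd⟩ with hi0
  have hsd : Real.sqrt d * Real.sqrt d = d := Real.mul_self_sqrt (Nat.cast_nonneg d)
  have hsd0 : (0:ℝ) < Real.sqrt d := Real.sqrt_pos.2 (by exact_mod_cast hd)
  -- second moment integrability for the pushforwards
  have key2 : ∀ (σ : Measure ℝ) (hσ : IsProbabilityMeasure σ)
      (hσ2 : Integrable (fun x => x ^ 2) σ),
      Integrable (fun x : Fin d → ℝ => ‖x‖ ^ 2)
        ((Measure.pi fun _ : Fin d => σ).map Q.mulVec) := by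
    intro σ hσ hσ2
    have hsum : Integrable (fun x : Fin d → ℝ => ∑ j, (x j) ^ 2)
        (Measure.pi fun _ : Fin d => σ) :=
      integrable_finset_sum _ fun j _ => aux_int_eval σ (fun y => y ^ 2) hσ2 j
    have hTsq : Integrable (fun x : Fin d → ℝ => ‖Q.mulVec x‖ ^ 2)
        (Measure.pi fun _ : Fin d => σ) := by
      refine hsum.mono ((hTmeas.norm.pow_const 2).aestronglyMeasurable)
        (ae_of_all _ fun x => ?_)
      rw [Real.norm_eq_abs, abs_of_nonneg (sq_nonneg _), Real.norm_eq_abs,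
        abs_of_nonneg (Finset.sum_nonneg fun i _ => sq_nonneg _)]
      calc ‖Q.mulVec x‖ ^ 2 ≤ ∑ i, (Q.mulVec x i) ^ 2 := aux_norm_sq_le _
        _ = ∑ j, (x j) ^ 2 := aux_orth Q hQ x
    exact (integrable_map_measure
      ((measurable_norm.pow_const 2).aestronglyMeasurable) hTmeas.aemeasurable).2 hTsq
  -- first-coordinate integral of the pushforwards
  have key1 : ∀ (σ : Measure ℝ) (hσ : IsProbabilityMeasure σ)
      (hσ2 : Integrable (fun x => x ^ 2) σ),
      Integrable (fun x : Fin d → ℝ => x i0) ((Measure.pi fun _ : Fin d => σ).map Q.mulVec)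
      ∧ ∫ x : Fin d → ℝ, x i0 ∂((Measure.pi fun _ : Fin d => σ).map Q.mulVec)
          = Real.sqrt d * ∫ y, y ∂σ := by
    intro σ hσ hσ2
    have hid : Integrable (fun y : ℝ => y) σ := aux_int_id σ hσ2
    have hcoord : ∀ x : Fin d → ℝ, Q.mulVec x i0 = (1 / Real.sqrt d) * ∑ j, x j := by
      intro x
      simp only [Matrix.mulVec, dotProduct, hrow, Finset.mul_sum]
    have hsumint : Integrable (fun x : Fin d → ℝ => ∑ j, x j)
        (Measure.pi fun _ : Fin d => σ) :=
      integrable_finset_sum _ fun j _ => aux_int_eval σ (fun y => y) hid j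
    have hTint : Integrable (fun x : Fin d → ℝ => Q.mulVec x i0)
        (Measure.pi fun _ : Fin d => σ) := by
      simp only [hcoord]
      exact hsumint.const_mul _
    constructor
    · exact (integrable_map_measure (measurable_pi_apply i0).aestronglyMeasurable
        hTmeas.aemeasurable).2 hTint
    · rw [integral_map hTmeas.aemeasurable (measurable_pi_apply i0).aestronglyMeasurable]
      simp only [hcoord]
      rw [integral_const_mul, integral_finset_sum _ fun j _ => aux_int_eval σ (fun y => y) hid j]
      have : ∀ j : Fin d, ∫ x : Fin d → ℝ, x j ∂(Measure.pi fun _ : Fin d => σ) = ∫ y, y ∂σ :=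
        fun j => aux_integral_eval σ j
      rw [Finset.sum_congr rfl fun j _ => this j, Finset.sum_const, Finset.card_univ,
        Fintype.card_fin, nsmul_eq_mul]
      have hds : (d : ℝ) / Real.sqrt d = Real.sqrt d := Real.div_sqrt
      rw [show (1 / Real.sqrt d * ((d : ℝ) * ∫ y, y ∂σ))
          = ((d : ℝ) / Real.sqrt d) * ∫ y, y ∂σ from by ring, hds]
  -- nonemptiness of the coupling set
  set S : Set ℝ := {r : ℝ | ∃ γ : Measure ((Fin d → ℝ) × (Fin d → ℝ)),
    IsProbabilityMeasure γ ∧ γ.map Prod.fst = μ.map Q.mulVec ∧ γ.map Prod.snd = ν.map Q.mulVec ∧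
    r = Real.sqrt (∫ p, ‖p.1 - p.2‖ ^ 2 ∂γ)} with hS
  have hμ' : IsProbabilityMeasure (μ.map Q.mulVec) :=
    Measure.isProbabilityMeasure_map hTmeas.aemeasurable
  have hν' : IsProbabilityMeasure (ν.map Q.mulVec) :=
    Measure.isProbabilityMeasure_map hTmeas.aemeasurable
  have hne : S.Nonempty := by
    refine ⟨_, (μ.map Q.mulVec).prod (ν.map Q.mulVec), inferInstance, ?_, ?_, rfl⟩
    · rw [Measure.map_fst_prod]; simp
    · rw [Measure.map_snd_prod]; simp
  have hW : W2linf (μ.map Q.mulVec) (ν.map Q.mulVec) = sInf S := rfl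
  rw [hW]
  refine le_csInf hne ?_
  rintro r ⟨γ, hγ, hfst, hsnd, rfl⟩
  -- integrability of the cost
  have h1 : Integrable (fun p : (Fin d → ℝ) × (Fin d → ℝ) => ‖p.1‖ ^ 2) γ := by
    have := (integrable_map_measure ((measurable_norm.pow_const 2).aestronglyMeasurable)
      measurable_fst.aemeasurable (μ := γ) (f := Prod.fst)).1
    rw [hfst] at this
    exact this (key2 ρ hρ hρ2)
  have h2 : Integrable (fun p : (Fin d → ℝ) × (Fin d → ℝ) => ‖p.2‖ ^ 2) γ := by
    have := (integrable_map_measure ((measurable_norm.pow_const 2).aestronglyMeasurable)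
      measurable_snd.aemeasurable (μ := γ) (f := Prod.snd)).1
    rw [hsnd] at this
    exact this (key2 ρ' hρ' hρ'2)
  have hI : Integrable (fun p : (Fin d → ℝ) × (Fin d → ℝ) => ‖p.1 - p.2‖ ^ 2) γ := by
    refine ((h1.const_mul 2).add (h2.const_mul 2)).mono'
      (((measurable_fst.sub measurable_snd).norm.pow_const 2).aestronglyMeasurable)
      (ae_of_all _ fun p => ?_)
    simp only [Pi.add_apply, Real.norm_eq_abs, abs_of_nonneg (sq_nonneg ‖p.1 - p.2‖)]
    have htri : ‖p.1 - p.2‖ ≤ ‖p.1‖ + ‖p.2‖ := norm_sub_le _ _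
    nlinarith [norm_nonneg (p.1 - p.2), norm_nonneg p.1, norm_nonneg p.2,
      sq_nonneg (‖p.1‖ - ‖p.2‖)]
  -- the test function
  set f : (Fin d → ℝ) × (Fin d → ℝ) → ℝ := fun p => p.1 i0 - p.2 i0 with hf
  have hfmeas : Measurable f :=
    ((measurable_pi_apply i0).comp measurable_fst).sub
      ((measurable_pi_apply i0).comp measurable_snd)
  have hfabs : ∀ p : (Fin d → ℝ) × (Fin d → ℝ), |f p| ≤ ‖p.1 - p.2‖ := by
    intro p
    have := norm_le_pi_norm (p.1 - p.2) i0
    simpa [hf, Real.norm_eq_abs] using this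
  have hf2 : Integrable (fun p => f p ^ 2) γ := by
    refine hI.mono ((hfmeas.pow_const 2).aestronglyMeasurable) (ae_of_all _ fun p => ?_)
    rw [Real.norm_eq_abs, abs_of_nonneg (sq_nonneg _), Real.norm_eq_abs,
      abs_of_nonneg (sq_nonneg _)]
    have := hfabs p
    nlinarith [abs_nonneg (f p), norm_nonneg (p.1 - p.2), sq_abs (f p)]
  have hfmem : MemLp f 2 γ :=
    (memLp_two_iff_integrable_sq hfmeas.aestronglyMeasurable).2 hf2
  -- Cauchy–Schwarz via variance
  have hvar : (∫ p, f p ∂γ) ^ 2 ≤ ∫ p, f p ^ 2 ∂γ := by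
    have h := ProbabilityTheory.variance_nonneg f γ
    rw [ProbabilityTheory.variance_eq_sub hfmem] at h
    simp only [Pi.pow_apply] at h
    linarith
  -- compute the mean of f
  have hk1 := key1 ρ hρ hρ2
  have hk2 := key1 ρ' hρ' hρ'2
  have hint1 : Integrable (fun p : (Fin d → ℝ) × (Fin d → ℝ) => p.1 i0) γ := by
    have := (integrable_map_measure (measurable_pi_apply i0).aestronglyMeasurable
      measurable_fst.aemeasurable (μ := γ) (f := Prod.fst)).1
    rw [hfst] at this
    exact this hk1.1
  have hint2 : Integrable (fun p : (Fin d → ℝ) × (Fin d → ℝ) => p.2 i0) γ := by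
    have := (integrable_map_measure (measurable_pi_apply i0).aestronglyMeasurable
      measurable_snd.aemeasurable (μ := γ) (f := Prod.snd)).1
    rw [hsnd] at this
    exact this hk2.1
  have hmean1 : ∫ p, p.1 i0 ∂γ = Real.sqrt d * ∫ y, y ∂ρ := by
    have e1 : ∫ x : Fin d → ℝ, x i0 ∂(γ.map Prod.fst) = ∫ p, p.1 i0 ∂γ :=
      integral_map measurable_fst.aemeasurable (measurable_pi_apply i0).aestronglyMeasurable
    rw [hfst] at e1
    exact e1.symm.trans hk1.2
  have hmean2 : ∫ p, p.2 i0 ∂γ = Real.sqrt d * ∫ y, y ∂ρ' := by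
    have e2 : ∫ x : Fin d → ℝ, x i0 ∂(γ.map Prod.snd) = ∫ p, p.2 i0 ∂γ :=
      integral_map measurable_snd.aemeasurable (measurable_pi_apply i0).aestronglyMeasurable
    rw [hsnd] at e2
    exact e2.symm.trans hk2.2
  have hmeanf : ∫ p, f p ∂γ = Real.sqrt d * ((∫ y, y ∂ρ) - ∫ y, y ∂ρ') := by
    rw [hf]
    rw [integral_sub hint1 hint2, hmean1, hmean2]
    ring
  -- conclude
  have hsq : (∫ p, f p ∂γ) ^ 2 = (d : ℝ) * δ ^ 2 := by
    rw [hmeanf, mul_pow, Real.sq_sqrt (Nat.cast_nonneg d),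
      ← sq_abs ((∫ y, y ∂ρ) - ∫ y, y ∂ρ'), hmean]
  have hle : ∫ p, f p ^ 2 ∂γ ≤ ∫ p, ‖p.1 - p.2‖ ^ 2 ∂γ := by
    refine integral_mono hf2 hI fun p => ?_
    have := hfabs p
    nlinarith [abs_nonneg (f p), norm_nonneg (p.1 - p.2), sq_abs (f p)]
  have hfinal : (d : ℝ) * δ ^ 2 ≤ ∫ p, ‖p.1 - p.2‖ ^ 2 ∂γ := by
    rw [← hsq]; exact le_trans hvar hle
  calc Real.sqrt d * δ = Real.sqrt ((d : ℝ) * δ ^ 2) := by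
        rw [Real.sqrt_mul (Nat.cast_nonneg d), Real.sqrt_sq hδ.le]
    _ ≤ Real.sqrt (∫ p, ‖p.1 - p.2‖ ^ 2 ∂γ) := Real.sqrt_le_sqrt hfinal
end

section
/- Let c ≥ 0 be a real number and let r be a natural number with r ≥ e²·c. Then Σ_{k=r+1}^{∞} (e·c/k)^k ≤ exp(−r), with the convention that each term equals 0 when c = 0. -/
/-- Tail estimate for high-order terms in the propagator expansion: for `c ≥ 0` and a natural
number `r ≥ e² c`, `Σ_{k=r+1}^∞ (e c / k)^k ≤ exp(-r)` (each term being `0` when `c = 0`). -/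
theorem statement11
    (c : ℝ) (hc : 0 ≤ c) (r : ℕ) (hr : Real.exp 1 ^ 2 * c ≤ r) :
    Summable (fun k : {k : ℕ // r + 1 ≤ k} =>
        (Real.exp 1 * c / ((k : ℕ) : ℝ)) ^ (k : ℕ)) ∧
      ∑' k : {k : ℕ // r + 1 ≤ k}, (Real.exp 1 * c / ((k : ℕ) : ℝ)) ^ (k : ℕ) ≤
        Real.exp (-(r : ℝ)) := by
  set x := Real.exp (-1) with hxdef
  have hx0 : 0 < x := Real.exp_pos _
  have hx1 : x < 1 := by
    rw [hxdef]
    exact Real.exp_lt_one_iff.mpr (by norm_num)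
  have he2 : (2 : ℝ) ≤ Real.exp 1 := by
    have := Real.exp_one_gt_d9; linarith
  have hxhalf : x ≤ 1/2 := by
    rw [hxdef, Real.exp_neg]
    rw [inv_le_comm₀ (by positivity) (by norm_num)]
    simpa using he2
  -- pointwise bound
  have key : ∀ k : {k : ℕ // r + 1 ≤ k},
      (Real.exp 1 * c / ((k : ℕ) : ℝ)) ^ (k : ℕ) ≤ x ^ (k : ℕ) := by
    intro ⟨k, hk⟩
    have hkpos : (0 : ℝ) < (k : ℝ) := by
      exact_mod_cast Nat.lt_of_lt_of_le (Nat.succ_pos r) hk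
    have hbase : Real.exp 1 * c / (k : ℝ) ≤ x := by
      rw [div_le_iff₀ hkpos, hxdef, Real.exp_neg]
      rw [← mul_le_mul_iff_right₀ (Real.exp_pos 1)]
      have hrk : (r : ℝ) ≤ (k : ℝ) := by exact_mod_cast Nat.le_of_succ_le hk
      calc Real.exp 1 * (Real.exp 1 * c) = Real.exp 1 ^ 2 * c := by ring
        _ ≤ (r : ℝ) := hr
        _ ≤ (k : ℝ) := hrk
        _ = Real.exp 1 * ((Real.exp 1)⁻¹ * (k : ℝ)) := by
            field_simp
    exact pow_le_pow_left₀ (by positivity) hbase _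
  have hnonneg : ∀ k : {k : ℕ // r + 1 ≤ k},
      0 ≤ (Real.exp 1 * c / ((k : ℕ) : ℝ)) ^ (k : ℕ) := by
    intro k; positivity
  have hsumg : Summable (fun k : {k : ℕ // r + 1 ≤ k} => x ^ (k : ℕ)) :=
    (summable_geometric_of_lt_one hx0.le hx1).subtype _
  have hsumf : Summable (fun k : {k : ℕ // r + 1 ≤ k} =>
      (Real.exp 1 * c / ((k : ℕ) : ℝ)) ^ (k : ℕ)) :=
    Summable.of_nonneg_of_le hnonneg key hsumg
  refine ⟨hsumf, ?_⟩
  have hle1 : ∑' k : {k : ℕ // r + 1 ≤ k}, (Real.exp 1 * c / ((k : ℕ) : ℝ)) ^ (k : ℕ)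
      ≤ ∑' k : {k : ℕ // r + 1 ≤ k}, x ^ (k : ℕ) :=
    Summable.tsum_le_tsum key hsumf hsumg
  -- compute geometric tail
  let e : ℕ ≃ {k : ℕ // r + 1 ≤ k} :=
    { toFun := fun n => ⟨n + (r + 1), Nat.le_add_left _ _⟩
      invFun := fun k => (k : ℕ) - (r + 1)
      left_inv := fun n => by simp
      right_inv := fun k => Subtype.ext (Nat.sub_add_cancel k.2) }
  have hgeq : ∑' k : {k : ℕ // r + 1 ≤ k}, x ^ (k : ℕ)
      = x ^ (r + 1) * (1 - x)⁻¹ := by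
    rw [← e.tsum_eq]
    have : ∀ n : ℕ, x ^ ((e n : ℕ)) = x ^ n * x ^ (r + 1) := by
      intro n; simp [e, pow_add]
    simp_rw [this]
    rw [tsum_mul_right, tsum_geometric_of_lt_one hx0.le hx1, mul_comm]
  rw [hgeq] at hle1
  refine hle1.trans ?_
  have hxr : x ^ (r + 1) = Real.exp (-(r : ℝ)) * x := by
    rw [hxdef, ← Real.exp_nat_mul]
    rw [← Real.exp_add]
    push_cast
    ring_nf
  rw [hxr]
  have h1x : (0 : ℝ) < 1 - x := by linarith
  have : x * (1 - x)⁻¹ ≤ 1 := by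
    rw [← div_eq_mul_inv, div_le_one h1x]
    linarith
  calc Real.exp (-(r : ℝ)) * x * (1 - x)⁻¹
      = Real.exp (-(r : ℝ)) * (x * (1 - x)⁻¹) := by ring
    _ ≤ Real.exp (-(r : ℝ)) * 1 := by
        exact mul_le_mul_of_nonneg_left this (Real.exp_pos _).le
    _ = Real.exp (-(r : ℝ)) := mul_one _
end
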